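/- Let W₁ be the wide decomposable subcategory of N5 consisting of all identity pairs together with (A,C), (C,1), (A,1), and (0,B). Then W₁ is not the set of all pairs x ≤ y, and the interval AF(W₁) of acyclic fibrations is nonmodular: there exist transfer systems T₁, T₂, T₃ on N5, each arising as the acyclic fibrations F ∩ W₁ of some model structure (W₁, C, F) on N5, with T₁ ⊆ T₃ and ⟨T₁ ∪ (T₂ ∩ T₃)⟩ ≠ ⟨T₁ ∪ T₂⟩ ∩ T₃, where meets of transfer systems are intersections and joins are generated transfer systems. -/

import Mathlib

/-- The five-element nonmodular lattice `N₅` with `0 < A < C < 1`, `0 < B < 1`,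
and `B` incomparable to `A` and `C`. -/
inductive N5 : Type
  | zero | A | B | C | one
  deriving DecidableEq

namespace N5

instance : Fintype N5 where
  elems := ⟨↑[zero, A, B, C, one], by decide⟩
  complete := fun x => by cases x <;> decide

def leBool : N5 → N5 → Bool
  | zero, _ => true
  | _, one => true
  | A, A => true
  | A, C => true
  | B, B => true
  | C, C => true
  | _, _ => false

instance : LE N5 := ⟨fun x y => leBool x y = true⟩

instance : DecidableRel ((· ≤ ·) : N5 → N5 → Prop) :=
  fun x y => inferInstanceAs (Decidable (leBool x y = true))

def supFn (x y : N5) : N5 := if leBool x y then y else if leBool y x then x else one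
def infFn (x y : N5) : N5 := if leBool x y then x else if leBool y x then y else zero

instance : Lattice N5 where
  le := (· ≤ ·)
  le_refl := by decide
  le_trans := by decide
  le_antisymm := by decide
  sup := supFn
  le_sup_left := by decide
  le_sup_right := by decide
  sup_le := by decide
  inf := infFn
  inf_le_left := by decide
  inf_le_right := by decide
  le_inf := by decide

end N5

section Defs

variable {L : Type*} [Lattice L]

/-- `llp S a b`: `a ≤ b` and `(a, b)` has the left lifting property with respect to
every pair in `S`. -/
def llp (S : L → L → Prop) (a b : L) : Prop :=
  a ≤ b ∧ ∀ x y, S x y → a ≤ x → b ≤ y → b ≤ x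

/-- `rlp S x y`: `x ≤ y` and every pair in `S` has the left lifting property with
respect to `(x, y)`. -/
def rlp (S : L → L → Prop) (x y : L) : Prop :=
  x ≤ y ∧ ∀ a b, S a b → a ≤ x → b ≤ y → b ≤ x

/-- A transfer system: a reflexive transitive subrelation of `≤` closed under pullbacks. -/
structure IsTransferSystem (T : L → L → Prop) : Prop where
  subLE : ∀ x y, T x y → x ≤ y
  refl : ∀ x, T x x
  trans : ∀ x y z, T x y → T y z → T x z
  pullback : ∀ x y z, T x y → z ≤ y → T (x ⊓ z) z

/-- A cotransfer system: a reflexive transitive subrelation of `≤` closed under pushouts. -/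
structure IsCotransferSystem (K : L → L → Prop) : Prop where
  subLE : ∀ x y, K x y → x ≤ y
  refl : ∀ x, K x x
  trans : ∀ x y z, K x y → K y z → K x z
  pushout : ∀ x y z, K x y → x ≤ z → K z (y ⊔ z)

/-- A wide decomposable subcategory of a lattice. -/
structure IsWideDecomposable (W : L → L → Prop) : Prop where
  subLE : ∀ x y, W x y → x ≤ y
  refl : ∀ x, W x x
  trans : ∀ x y z, W x y → W y z → W x z
  decomp : ∀ x y z, W x z → x ≤ y → y ≤ z → W x y ∧ W y z

/-- A model structure on a lattice, given by weak equivalences `W`, cofibrations `C`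
and fibrations `F`. -/
structure IsModelStructure (W C F : L → L → Prop) : Prop where
  W_subLE : ∀ x y, W x y → x ≤ y
  W_refl : ∀ x, W x x
  C_subLE : ∀ x y, C x y → x ≤ y
  C_refl : ∀ x, C x x
  F_subLE : ∀ x y, F x y → x ≤ y
  F_refl : ∀ x, F x x
  two_three_comp : ∀ x y z, x ≤ y → y ≤ z → W x y → W y z → W x z
  two_three_right : ∀ x y z, x ≤ y → y ≤ z → W x y → W x z → W y z
  two_three_left : ∀ x y z, x ≤ y → y ≤ z → W y z → W x z → W x y
  lift_AC : ∀ x y, (C x y ∧ W x y) ↔ llp F x y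
  lift_C : ∀ x y, C x y ↔ llp (fun a b => F a b ∧ W a b) x y
  lift_F : ∀ x y, F x y ↔ rlp (fun a b => C a b ∧ W a b) x y
  lift_AF : ∀ x y, (F x y ∧ W x y) ↔ rlp C x y
  fact_C_AF : ∀ x y, x ≤ y → ∃ z, x ≤ z ∧ z ≤ y ∧ C x z ∧ F z y ∧ W z y
  fact_AC_F : ∀ x y, x ≤ y → ∃ z, x ≤ z ∧ z ≤ y ∧ C x z ∧ W x z ∧ F z y

/-- The smallest transfer system containing `S`: the intersection of all transfer
systems containing `S`. -/
def genTS (S : L → L → Prop) (x y : L) : Prop :=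
  ∀ T : L → L → Prop, IsTransferSystem T → (∀ a b, S a b → T a b) → T x y

end Defs

/-- A bundled model structure on a lattice. -/
structure ModelStructure (L : Type*) [Lattice L] where
  W : L → L → Prop
  C : L → L → Prop
  F : L → L → Prop
  isModel : IsModelStructure W C F

/-- `M'` is a left Bousfield localization of `M`: same cofibrations, more weak equivalences. -/
def IsLeftBousfieldLoc {L : Type*} [Lattice L] (M M' : ModelStructure L) : Prop :=
  M'.C = M.C ∧ ∀ x y, M.W x y → M'.W x y

/-- `M'` is a right Bousfield localization of `M`: same fibrations, more weak equivalences. -/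
def IsRightBousfieldLoc {L : Type*} [Lattice L] (M M' : ModelStructure L) : Prop :=
  M'.F = M.F ∧ ∀ x y, M.W x y → M'.W x y


/-- The wide decomposable subcategory `W₁` of `N5`: identities together with
`(A,C)`, `(C,1)`, `(A,1)` and `(0,B)`. -/
def W1 : N5 → N5 → Prop := fun x y =>
  x = y ∨ (x = N5.A ∧ y = N5.C) ∨ (x = N5.C ∧ y = N5.one) ∨
    (x = N5.A ∧ y = N5.one) ∨ (x = N5.zero ∧ y = N5.B)

/-- `W₁` is a nontrivial weak equivalence set on `N5` whose interval of
acyclic fibrations `AF(W₁)` is nonmodular. -/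

def t1b : N5 → N5 → Bool
  | N5.zero, N5.B => true
  | N5.A, N5.C => true
  | x, y => x == y

def t2b : N5 → N5 → Bool
  | N5.zero, N5.B => true
  | N5.C, N5.one => true
  | x, y => x == y

def t3b : N5 → N5 → Bool
  | N5.zero, N5.B => true
  | N5.A, N5.one => true
  | N5.A, N5.C => true
  | x, y => x == y

def c1b : N5 → N5 → Bool
  | N5.zero, N5.one => true
  | N5.zero, N5.A => true
  | N5.A, N5.one => true
  | N5.B, N5.one => true
  | N5.C, N5.one => true
  | x, y => x == y

def f1b : N5 → N5 → Bool
  | N5.zero, N5.one => true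
  | N5.zero, N5.A => true
  | N5.zero, N5.B => true
  | N5.zero, N5.C => true
  | N5.A, N5.C => true
  | N5.B, N5.one => true
  | x, y => x == y

def c2b : N5 → N5 → Bool
  | N5.zero, N5.A => true
  | N5.zero, N5.C => true
  | N5.A, N5.C => true
  | N5.B, N5.one => true
  | x, y => x == y

def f2b : N5 → N5 → Bool
  | N5.zero, N5.one => true
  | N5.zero, N5.A => true
  | N5.zero, N5.B => true
  | N5.zero, N5.C => true
  | N5.B, N5.one => true
  | N5.C, N5.one => true
  | x, y => x == y

def c3b : N5 → N5 → Bool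
  | N5.zero, N5.A => true
  | N5.B, N5.one => true
  | N5.C, N5.one => true
  | x, y => x == y

def f3b : N5 → N5 → Bool
  | N5.zero, N5.one => true
  | N5.zero, N5.A => true
  | N5.zero, N5.B => true
  | N5.zero, N5.C => true
  | N5.A, N5.one => true
  | N5.A, N5.C => true
  | N5.B, N5.one => true
  | x, y => x == y

def T1' : N5 → N5 → Prop := fun x y => t1b x y = true
def T2' : N5 → N5 → Prop := fun x y => t2b x y = true
def T3' : N5 → N5 → Prop := fun x y => t3b x y = true


instance instDecW1 : ∀ a b, Decidable (W1 a b) := fun a b => by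
  unfold W1; infer_instance
instance instDecT1 : ∀ a b, Decidable (T1' a b) := fun a b => by
  unfold T1'; infer_instance
instance instDecT2 : ∀ a b, Decidable (T2' a b) := fun a b => by
  unfold T2'; infer_instance
instance instDecT3 : ∀ a b, Decidable (T3' a b) := fun a b => by
  unfold T3'; infer_instance
instance instDecLlp (S : N5 → N5 → Prop) [∀ a b, Decidable (S a b)] :
    ∀ a b, Decidable (llp S a b) := fun a b => by
  unfold llp; infer_instance
instance instDecRlp (S : N5 → N5 → Prop) [∀ a b, Decidable (S a b)] :
    ∀ a b, Decidable (rlp S a b) := fun a b => by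
  unfold rlp; infer_instance

theorem AF_W1_nonmodular :
    W1 ≠ (fun x y => x ≤ y) ∧
    ∃ T₁ T₂ T₃ : N5 → N5 → Prop,
      IsTransferSystem T₁ ∧ IsTransferSystem T₂ ∧ IsTransferSystem T₃ ∧
      (∃ C F : N5 → N5 → Prop, IsModelStructure W1 C F ∧
        (fun x y => F x y ∧ W1 x y) = T₁) ∧
      (∃ C F : N5 → N5 → Prop, IsModelStructure W1 C F ∧
        (fun x y => F x y ∧ W1 x y) = T₂) ∧
      (∃ C F : N5 → N5 → Prop, IsModelStructure W1 C F ∧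
        (fun x y => F x y ∧ W1 x y) = T₃) ∧
      (∀ x y, T₁ x y → T₃ x y) ∧
      genTS (fun x y => T₁ x y ∨ (T₂ x y ∧ T₃ x y)) ≠
        (fun x y => genTS (fun a b => T₁ a b ∨ T₂ a b) x y ∧ T₃ x y)  := by
  constructor
  · intro h
    have h2 : W1 N5.zero N5.A := by rw [h]; decide
    exact absurd h2 (by decide)
  refine ⟨T1', T2', T3', ?_, ?_, ?_, ?_, ?_, ?_, ?_, ?_⟩
  · exact ⟨by decide, by decide, by decide, by decide⟩
  · exact ⟨by decide, by decide, by decide, by decide⟩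
  · exact ⟨by decide, by decide, by decide, by decide⟩
  · refine ⟨fun x y => c1b x y = true, fun x y => f1b x y = true, ?_, ?_⟩
    · exact ⟨by decide, by decide, by decide, by decide, by decide, by decide,
        by decide, by decide, by decide, by decide, by decide, by decide,
        by decide, by decide, by decide⟩
    · funext x y; cases x <;> cases y <;> exact propext (by decide)
  · refine ⟨fun x y => c2b x y = true, fun x y => f2b x y = true, ?_, ?_⟩
    · exact ⟨by decide, by decide, by decide, by decide, by decide, by decide,
        by decide, by decide, by decide, by decide, by decide, by decide,
        by decide, by decide, by decide⟩
    · funext x y; cases x <;> cases y <;> exact propext (by decide)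
  · refine ⟨fun x y => c3b x y = true, fun x y => f3b x y = true, ?_, ?_⟩
    · exact ⟨by decide, by decide, by decide, by decide, by decide, by decide,
        by decide, by decide, by decide, by decide, by decide, by decide,
        by decide, by decide, by decide⟩
    · funext x y; cases x <;> cases y <;> exact propext (by decide)
  · decide
  · intro h
    have hA1 := congrFun (congrFun h N5.A) N5.one
    have hrhs : genTS (fun a b => T1' a b ∨ T2' a b) N5.A N5.one ∧ T3' N5.A N5.one := by
      refine ⟨?_, by decide⟩
      intro T hT hS
      exact hT.trans _ N5.C _ (hS _ _ (Or.inl (by decide))) (hS _ _ (Or.inr (by decide)))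
    have hlhs : genTS (fun x y => T1' x y ∨ (T2' x y ∧ T3' x y)) N5.A N5.one := hA1 ▸ hrhs
    have : T1' N5.A N5.one := by
      apply hlhs T1' ⟨by decide, by decide, by decide, by decide⟩
      intro a b hab
      rcases hab with h1 | ⟨h2, h3⟩
      · exact h1
      · revert h2 h3; revert a b; decide
    exact absurd this (by decide)
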